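/- arXiv:2302.09383 — 2 statements merged into one kernel-verified Lean document; each statement's English description precedes it below -/
import Mathlib

section
/- Let ν ≥ 2, let Ψ be a nonempty finite set of coverings, and let (E,E') be a nontrivial bipartition of Γ_{2ν} such that Ψ is factorable via E: Ψ is decomposable via E and for all ψ₁, ψ₂ ∈ Ψ there exists ψ ∈ Ψ that agrees with ψ₁ on E∩A and with ψ₂ on E'∩A. Then F_Ψ equals the product (Σ_{φ₁} ∏_{a∈E∩A}(X_{φ₁(a)} − X_a)) · (Σ_{φ₂} ∏_{a∈E'∩A}(X_{φ₂(a)} − X_a)), where φ₁ ranges over the distinct restrictions ψ|_{E∩A} (ψ ∈ Ψ) and φ₂ over the distinct restrictions ψ|_{E'∩A} (ψ ∈ Ψ); in particular F_Ψ splits across the bipartition (E,E'). -/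
open MvPolynomial Finset

noncomputable section

/-- The odd-labelled site `2t−1` of the paper (`t`-th site of sublattice `A`),
zero-indexed as `2t` in `Fin (2ν)`. -/
def siteA (ν : ℕ) (t : Fin ν) : Fin (2 * ν) := ⟨2 * t.val, by have := t.isLt; omega⟩

/-- The even-labelled site `2t` of the paper (`t`-th site of sublattice `B`),
zero-indexed as `2t+1` in `Fin (2ν)`. -/
def siteB (ν : ℕ) (t : Fin ν) : Fin (2 * ν) := ⟨2 * t.val + 1, by have := t.isLt; omega⟩

/-- A covering is a bijection `ψ : A → B`; it is encoded by the permutation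
`σ` of `Fin ν` with `ψ(siteA t) = siteB (σ t)`.  Its covering polynomial is
`F_ψ = ∏_{a∈A} (X_{ψ(a)} − X_a)`. -/
def covPoly (ν : ℕ) (σ : Equiv.Perm (Fin ν)) : MvPolynomial (Fin (2 * ν)) ℂ :=
  ∏ t : Fin ν, (X (siteB ν (σ t)) - X (siteA ν t))

/-- `F` splits across the bipartition `(E, Eᶜ)`. -/
def SplitsAcross {n : ℕ} (F : MvPolynomial (Fin n) ℂ) (E : Finset (Fin n)) : Prop :=
  ∃ p q : MvPolynomial (Fin n) ℂ, F = p * q ∧ p.vars ⊆ E ∧ q.vars ⊆ Eᶜ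

/-- `ψ(E ∩ A) = E ∩ B` for the covering `ψ` encoded by `σ`
(here `E ∩ B` is the set of odd-indexed, i.e. `B`-sublattice, elements of `E`). -/
def MapsCut (ν : ℕ) (σ : Equiv.Perm (Fin ν)) (E : Finset (Fin (2 * ν))) : Prop :=
  ((Finset.univ.filter (fun t => siteA ν t ∈ E)).image fun t => siteB ν (σ t))
    = E.filter (fun x => x.val % 2 = 1)


/-- The (unnormalized) RVB polynomial `F_Ψ = Σ_{ψ∈Ψ} F_ψ`. -/
def rvbPoly (ν : ℕ) (Ψ : Finset (Equiv.Perm (Fin ν))) : MvPolynomial (Fin (2 * ν)) ℂ :=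
  ∑ σ ∈ Ψ, covPoly ν σ

/-- Sum of the *distinct* values of `f` over `s`. -/
noncomputable def distinctSum {α M : Type*} [AddCommMonoid M] (s : Finset α) (f : α → M) : M :=
  letI := Classical.decEq M
  (s.image f).sum id

/-- The partial covering polynomial `∏_{a ∈ E∩A} (X_{ψ(a)} − X_a)`; it depends only
on the restriction of the covering to `E ∩ A`. -/
def pPart (ν : ℕ) (E : Finset (Fin (2 * ν))) (σ : Equiv.Perm (Fin ν)) :
    MvPolynomial (Fin (2 * ν)) ℂ :=
  ∏ t ∈ Finset.univ.filter (fun t => siteA ν t ∈ E),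
    (X (siteB ν (σ t)) - X (siteA ν t))

/-- The partial covering polynomial `∏_{a ∈ E'∩A} (X_{ψ(a)} − X_a)`; it depends only
on the restriction of the covering to `E' ∩ A`. -/
def qPart (ν : ℕ) (E : Finset (Fin (2 * ν))) (σ : Equiv.Perm (Fin ν)) :
    MvPolynomial (Fin (2 * ν)) ℂ :=
  ∏ t ∈ Finset.univ.filter (fun t => siteA ν t ∉ E),
    (X (siteB ν (σ t)) - X (siteA ν t))

lemma siteA_inj (ν : ℕ) : Function.Injective (siteA ν) := by
  intro a b h
  simp only [siteA, Fin.mk.injEq] at h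
  exact Fin.ext (by omega)

lemma siteB_inj (ν : ℕ) : Function.Injective (siteB ν) := by
  intro a b h
  simp only [siteB, Fin.mk.injEq] at h
  exact Fin.ext (by omega)

lemma siteB_ne_siteA (ν : ℕ) (b t : Fin ν) : siteB ν b ≠ siteA ν t := by
  simp only [siteA, siteB, ne_eq, Fin.mk.injEq]
  omega

lemma siteB_odd (ν : ℕ) (b : Fin ν) : (siteB ν b).val % 2 = 1 := by
  simp only [siteB]; omega

lemma siteA_even (ν : ℕ) (t : Fin ν) : (siteA ν t).val % 2 = 0 := by
  simp only [siteA]; omega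

lemma part_inj (ν : ℕ) (p : Fin ν → Prop) [DecidablePred p] (σ σ' : Equiv.Perm (Fin ν))
    (h : ∏ t ∈ Finset.univ.filter p, ((X (siteB ν (σ t)) - X (siteA ν t)) : MvPolynomial (Fin (2*ν)) ℂ)
       = ∏ t ∈ Finset.univ.filter p, (X (siteB ν (σ' t)) - X (siteA ν t)))
    {t0 : Fin ν} (ht0 : p t0) : σ t0 = σ' t0 := by
  by_contra hne
  set x : Fin (2 * ν) → ℂ := fun i =>
    if i = siteA ν t0 then 1 else if i.val % 2 = 0 then 0
    else if i = siteB ν (σ t0) then 2 else 1 with hx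
  have hxA1 : x (siteA ν t0) = 1 := by simp [hx]
  have hxA0 : ∀ t, t ≠ t0 → x (siteA ν t) = 0 := by
    intro t ht
    simp only [hx]
    rw [if_neg (fun hc => ht (siteA_inj ν hc)), if_pos (siteA_even ν t)]
  have hxB : ∀ b, x (siteB ν b) = if b = σ t0 then 2 else 1 := by
    intro b
    simp only [hx]
    rw [if_neg (siteB_ne_siteA ν b t0), if_neg (by rw [siteB_odd ν b]; omega)]
    simp only [(siteB_inj ν).eq_iff]
  have hmem : t0 ∈ Finset.univ.filter p := Finset.mem_filter.mpr ⟨Finset.mem_univ _, ht0⟩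
  have h1 : eval x (∏ t ∈ Finset.univ.filter p,
      ((X (siteB ν (σ t)) - X (siteA ν t)) : MvPolynomial (Fin (2*ν)) ℂ)) = 1 := by
    rw [map_prod]
    apply Finset.prod_eq_one
    intro t _
    simp only [map_sub, eval_X, hxB]
    by_cases hc : t = t0
    · subst hc; rw [if_pos rfl, hxA1]; norm_num
    · rw [if_neg (fun hc2 => hc (σ.injective hc2)), hxA0 t hc]; norm_num
  have h2 : eval x (∏ t ∈ Finset.univ.filter p,
      ((X (siteB ν (σ' t)) - X (siteA ν t)) : MvPolynomial (Fin (2*ν)) ℂ)) = 0 := by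
    rw [map_prod]
    apply Finset.prod_eq_zero hmem
    simp only [map_sub, eval_X, hxB, hxA1]
    rw [if_neg (fun hc => hne hc.symm)]
    norm_num
  rw [h] at h1
  exact one_ne_zero (h1.symm.trans h2)

lemma vars_part (ν : ℕ) (S : Finset (Fin ν)) (σ : Equiv.Perm (Fin ν)) :
    (∏ t ∈ S, ((X (siteB ν (σ t)) - X (siteA ν t)) : MvPolynomial (Fin (2*ν)) ℂ)).vars
      ⊆ S.biUnion (fun t => {siteB ν (σ t), siteA ν t}) := by
  refine (vars_prod _).trans ?_
  intro v hv
  rw [Finset.mem_biUnion] at hv ⊢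
  obtain ⟨t, ht, hvt⟩ := hv
  refine ⟨t, ht, ?_⟩
  have := vars_sub_subset (p := (X (siteB ν (σ t)) : MvPolynomial (Fin (2*ν)) ℂ)) (q := X (siteA ν t)) hvt
  rw [vars_X, vars_X] at this
  simpa using this

set_option maxHeartbeats 1000000

/-- Theorem 3.3: if `Ψ` is factorable via `E` (decomposable via
`E`, and any pair of restrictions to `E∩A` and `E'∩A` coming from `Ψ` is jointly
realized by some member of `Ψ`), then `F_Ψ` is the product of the sums of the
distinct partial products over `E∩A` and over `E'∩A`; in particular `F_Ψ` splits
across `(E,E')`. -/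
theorem stmt_12 (ν : ℕ) (hν : 2 ≤ ν) (Ψ : Finset (Equiv.Perm (Fin ν)))
    (hΨ : Ψ.Nonempty)
    (E : Finset (Fin (2 * ν))) (hE : E.Nonempty) (hE' : E ≠ Finset.univ)
    (hdec : ∀ σ ∈ Ψ, MapsCut ν σ E)
    (hfac : ∀ σ₁ ∈ Ψ, ∀ σ₂ ∈ Ψ, ∃ σ ∈ Ψ,
      (∀ t : Fin ν, siteA ν t ∈ E → σ t = σ₁ t) ∧
      (∀ t : Fin ν, siteA ν t ∉ E → σ t = σ₂ t)) :
    rvbPoly ν Ψ = distinctSum Ψ (pPart ν E) * distinctSum Ψ (qPart ν E) ∧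
    SplitsAcross (rvbPoly ν Ψ) E := by
  classical
  have hcov : ∀ σ : Equiv.Perm (Fin ν), covPoly ν σ = pPart ν E σ * qPart ν E σ := by
    intro σ
    exact (Finset.prod_filter_mul_prod_filter_not Finset.univ _ _).symm
  have hpres : ∀ σ₁ σ₂ : Equiv.Perm (Fin ν), (∀ t, siteA ν t ∈ E → σ₁ t = σ₂ t) →
      pPart ν E σ₁ = pPart ν E σ₂ := by
    intro σ₁ σ₂ hh
    exact Finset.prod_congr rfl fun t ht => by rw [hh t (Finset.mem_filter.mp ht).2]
  have hqres : ∀ σ₁ σ₂ : Equiv.Perm (Fin ν), (∀ t, siteA ν t ∉ E → σ₁ t = σ₂ t) →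
      qPart ν E σ₁ = qPart ν E σ₂ := by
    intro σ₁ σ₂ hh
    exact Finset.prod_congr rfl fun t ht => by rw [hh t (Finset.mem_filter.mp ht).2]
  have hds : ∀ (f : Equiv.Perm (Fin ν) → MvPolynomial (Fin (2*ν)) ℂ),
      distinctSum Ψ f = (Ψ.image f).sum id := by
    intro f
    unfold distinctSum
    congr 1
    ext x
    simp [Finset.mem_image]
  have key : rvbPoly ν Ψ = distinctSum Ψ (pPart ν E) * distinctSum Ψ (qPart ν E) := by
    unfold rvbPoly
    rw [hds, hds, Finset.sum_mul_sum, ← Finset.sum_product']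
    refine Finset.sum_bij (fun σ _ => (pPart ν E σ, qPart ν E σ)) ?_ ?_ ?_ ?_
    · intro σ hσ
      exact Finset.mem_product.mpr ⟨Finset.mem_image_of_mem _ hσ, Finset.mem_image_of_mem _ hσ⟩
    · intro σ₁ h₁ σ₂ h₂ heq
      rw [Prod.mk.injEq] at heq
      apply Equiv.ext
      intro t
      by_cases hc : siteA ν t ∈ E
      · exact part_inj ν _ σ₁ σ₂ heq.1 hc
      · exact part_inj ν _ σ₁ σ₂ heq.2 hc
    · intro b hb
      rw [Finset.mem_product] at hb
      obtain ⟨σ₁, hσ₁, hp1⟩ := Finset.mem_image.mp hb.1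
      obtain ⟨σ₂, hσ₂, hq2⟩ := Finset.mem_image.mp hb.2
      obtain ⟨σ, hσ, h1, h2⟩ := hfac σ₁ hσ₁ σ₂ hσ₂
      exact ⟨σ, hσ, by rw [Prod.ext_iff]; exact ⟨(hpres σ σ₁ h1).trans hp1, (hqres σ σ₂ h2).trans hq2⟩⟩
    · intro σ hσ
      exact hcov σ
  refine ⟨key, distinctSum Ψ (pPart ν E), distinctSum Ψ (qPart ν E), key, ?_, ?_⟩
  · rw [hds]
    refine (vars_sum_subset _ _).trans ?_
    intro v hv
    obtain ⟨f, hf, hvf⟩ := Finset.mem_biUnion.mp hv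
    obtain ⟨σ, hσ, rfl⟩ := Finset.mem_image.mp hf
    have hvf' : v ∈ (pPart ν E σ).vars := hvf
    unfold pPart at hvf'
    have hv2 := vars_part ν (Finset.univ.filter (fun t => siteA ν t ∈ E)) σ hvf'
    obtain ⟨t, ht, hvt⟩ := Finset.mem_biUnion.mp hv2
    have htE : siteA ν t ∈ E := (Finset.mem_filter.mp ht).2
    rcases Finset.mem_insert.mp hvt with h | h
    · subst h
      have : siteB ν (σ t) ∈ E.filter (fun x => x.val % 2 = 1) := by
        rw [← hdec σ hσ]
        exact Finset.mem_image_of_mem _ ht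
      exact (Finset.mem_filter.mp this).1
    · rw [Finset.mem_singleton.mp h]; exact htE
  · rw [hds]
    refine (vars_sum_subset _ _).trans ?_
    intro v hv
    obtain ⟨f, hf, hvf⟩ := Finset.mem_biUnion.mp hv
    obtain ⟨σ, hσ, rfl⟩ := Finset.mem_image.mp hf
    have hvf' : v ∈ (qPart ν E σ).vars := hvf
    unfold qPart at hvf'
    have hv2 := vars_part ν (Finset.univ.filter (fun t => siteA ν t ∉ E)) σ hvf'
    obtain ⟨t, ht, hvt⟩ := Finset.mem_biUnion.mp hv2
    have htE : siteA ν t ∉ E := (Finset.mem_filter.mp ht).2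
    rw [Finset.mem_compl]
    rcases Finset.mem_insert.mp hvt with h | h
    · subst h
      intro hcon
      have : siteB ν (σ t) ∈ E.filter (fun x => x.val % 2 = 1) :=
        Finset.mem_filter.mpr ⟨hcon, siteB_odd ν (σ t)⟩
      rw [← hdec σ hσ] at this
      obtain ⟨t', ht', heq⟩ := Finset.mem_image.mp this
      have : t' = t := σ.injective (siteB_inj ν heq)
      subst this
      exact htE (Finset.mem_filter.mp ht').2
    · rw [Finset.mem_singleton.mp h]; exact htE
end
end

section
/- Let ν ≥ 2 and let Ψ be a set of coverings with #Ψ ≥ 2 such that s = #Ψ is a prime number. Then exactly one of the following holds: (a) Ψ is flat or a pole; (b) F_Ψ splits across no nontrivial bipartition of Γ_{2ν} (the RVB state |Ψ⟩ is genuinely multipartite entangled). Equivalently, under the primality of s: F_Ψ splits across some nontrivial bipartition if and only if Ψ is flat or a pole. -/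
/-!
Expanding `F_Ψ`, the coefficient of a square-free monomial `∏_{x ∈ D} X_x` is `±N(D)`, where `N(D)`
counts the coverings in `Ψ` for which `D` contains exactly one endpoint of every dimer. If
`F_Ψ = p * q` with `p` in the variables of `E` and `q` in those of `E'`, each such coefficient is a
coefficient of `p` times one of `q`, whence `N(D) N(D') = N(D ∩ E ∪ D' ∖ E) N(D' ∩ E ∪ D ∖ E)`.
Suitable choices of `D, D'` show first that every covering in `Ψ` maps `E ∩ A` into `E`, and
then that for `a₀ ∈ E ∩ A`, `a ∈ E' ∩ A`, `b₀ ∈ E ∩ B`, `b ∈ E' ∩ B`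
`#{ψ(a₀) = b₀} · #{ψ(a) = b} = #{ψ(a₀) = b₀, ψ(a) = b} · #Ψ`.
If `#Ψ` is prime and the coverings disagree at some `a₀ ∈ E`, the first factor lies strictly
between `0` and `#Ψ`, so `#Ψ` divides the second and the coverings agree at every `a ∈ E'`:
`Ψ` is flat. Otherwise they agree on `E ∩ A` and `Ψ` is a pole. Conversely, for flat `Ψ` (and, with
`E` and `E'` swapped, for a pole) the common factor can be pulled out of the sum.
-/

open MvPolynomial Finset

noncomputable section

/-- `Ψ` is flat via `E`: decomposable via `E` and all coverings in `Ψ` have the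
same restriction to `E' ∩ A`. -/
def FlatVia (ν : ℕ) (Ψ : Finset (Equiv.Perm (Fin ν))) (E : Finset (Fin (2 * ν))) : Prop :=
  (∀ σ ∈ Ψ, MapsCut ν σ E) ∧
  ∀ σ₁ ∈ Ψ, ∀ σ₂ ∈ Ψ, ∀ t : Fin ν, siteA ν t ∉ E → σ₁ t = σ₂ t

/-- `Ψ` is a pole via `E`: decomposable via `E` and all coverings in `Ψ` have the
same restriction to `E ∩ A`. -/
def PoleVia (ν : ℕ) (Ψ : Finset (Equiv.Perm (Fin ν))) (E : Finset (Fin (2 * ν))) : Prop :=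
  (∀ σ ∈ Ψ, MapsCut ν σ E) ∧
  ∀ σ₁ ∈ Ψ, ∀ σ₂ ∈ Ψ, ∀ t : Fin ν, siteA ν t ∈ E → σ₁ t = σ₂ t

section SquareFree

variable {σ : Type*}

def sqfreeExp (D : Finset σ) : σ →₀ ℕ := ∑ x ∈ D, Finsupp.single x 1

theorem prod_X_eq_monomial_sqfreeExp {R : Type*} [CommSemiring R] (D : Finset σ) :
    ∏ x ∈ D, (X x : MvPolynomial σ R) = monomial (sqfreeExp D) 1 := by
  rw [sqfreeExp, monomial_sum_one]
  rfl

variable [DecidableEq σ]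

theorem sqfreeExp_apply (D : Finset σ) (x : σ) : sqfreeExp D x = if x ∈ D then 1 else 0 := by
  simp [sqfreeExp, Finsupp.finsetSum_apply, Finsupp.single_apply]

theorem sqfreeExp_injective : Function.Injective (sqfreeExp : Finset σ → σ →₀ ℕ) := by
  intro D D' h
  ext x
  have hx := DFunLike.congr_fun h x
  simp only [sqfreeExp_apply] at hx
  split_ifs at hx <;> simp_all

theorem sqfreeExp_inter_union_sdiff (D D' E : Finset σ) :
    sqfreeExp (D ∩ E ∪ D' \ E) = (sqfreeExp D).filter (· ∈ E) + (sqfreeExp D').filter (· ∉ E) := by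
  ext x
  simp only [Finsupp.add_apply, Finsupp.filter_apply, sqfreeExp_apply]
  by_cases hx : x ∈ E <;> simp [hx]

end SquareFree

namespace MvPolynomial

variable {σ R : Type*} [CommSemiring R] {p q : MvPolynomial σ R}

theorem mem_vars_of_coeff_ne_zero {m : σ →₀ ℕ} {x : σ} (hm : coeff m p ≠ 0) (hx : m x ≠ 0) :
    x ∈ p.vars :=
  (mem_vars_iff_mem_support x).mpr ⟨m, mem_support_iff.mpr hm, Finsupp.mem_support_iff.mpr hx⟩

variable [Fintype σ] [DecidableEq σ] {E : Finset σ}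

theorem coeff_mul_of_vars_subset (hp : p.vars ⊆ E) (hq : q.vars ⊆ Eᶜ) (m : σ →₀ ℕ) :
    coeff m (p * q) = coeff (m.filter (· ∈ E)) p * coeff (m.filter (· ∉ E)) q := by
  rw [coeff_mul]
  refine Finset.sum_eq_single_of_mem (m.filter (· ∈ E), m.filter (· ∉ E))
    (HasAntidiagonal.mem_antidiagonal.mpr (Finsupp.filter_add_filter_not m _)) ?_
  rintro ⟨a, b⟩ hab hne
  rw [HasAntidiagonal.mem_antidiagonal] at hab
  by_contra hc
  have ha := left_ne_zero_of_mul hc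
  have hb := right_ne_zero_of_mul hc
  have haE : a.filter (· ∈ E) = a := (Finsupp.filter_eq_self_iff _ _).mpr fun x hx =>
    hp (mem_vars_of_coeff_ne_zero ha hx)
  have hbE : b.filter (· ∈ E) = 0 := (Finsupp.filter_eq_zero_iff _ _).mpr fun x hx =>
    by_contra fun hbx => Finset.mem_compl.mp (hq (mem_vars_of_coeff_ne_zero hb hbx)) hx
  have haE' : a.filter (· ∉ E) = 0 := (Finsupp.filter_eq_zero_iff _ _).mpr fun x hx =>
    by_contra fun hax => hx (hp (mem_vars_of_coeff_ne_zero ha hax))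
  have hbE' : b.filter (· ∉ E) = b := (Finsupp.filter_eq_self_iff _ _).mpr fun x hx =>
    Finset.mem_compl.mp (hq (mem_vars_of_coeff_ne_zero hb hx))
  apply hne
  rw [← hab, Finsupp.filter_add, Finsupp.filter_add, haE, hbE, haE', hbE', add_zero, zero_add]

theorem coeff_mul_coeff_of_vars_subset (hp : p.vars ⊆ E) (hq : q.vars ⊆ Eᶜ) (m n : σ →₀ ℕ) :
    coeff m (p * q) * coeff n (p * q)
      = coeff (m.filter (· ∈ E) + n.filter (· ∉ E)) (p * q)
        * coeff (n.filter (· ∈ E) + m.filter (· ∉ E)) (p * q) := by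
  have hin : ∀ a b : σ →₀ ℕ,
      (a.filter (· ∈ E) + b.filter (· ∉ E)).filter (· ∈ E) = a.filter (· ∈ E) := by
    intro a b; ext x; by_cases hx : x ∈ E <;> simp [hx]
  have hout : ∀ a b : σ →₀ ℕ,
      (a.filter (· ∈ E) + b.filter (· ∉ E)).filter (· ∉ E) = b.filter (· ∉ E) := by
    intro a b; ext x; by_cases hx : x ∈ E <;> simp [hx]
  simp only [coeff_mul_of_vars_subset hp hq m, coeff_mul_of_vars_subset hp hq n,
    coeff_mul_of_vars_subset hp hq (_ + _), hin, hout]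
  ring

end MvPolynomial

theorem SplitsAcross.compl {n : ℕ} {F : MvPolynomial (Fin n) ℂ} {E : Finset (Fin n)}
    (h : SplitsAcross F E) : SplitsAcross F Eᶜ := by
  obtain ⟨p, q, hF, hp, hq⟩ := h
  exact ⟨q, p, hF.trans (mul_comm p q), hq, by rwa [compl_compl]⟩

theorem card_filter_mem_inter_union_sdiff_add {ι α : Type*} [DecidableEq α] (s : Finset ι)
    (f : ι → α) (D D' E : Finset α) :
    #(s.filter (f · ∈ D ∩ E ∪ D' \ E)) + #(s.filter (f · ∈ D' ∩ E ∪ D \ E))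
      = #(s.filter (f · ∈ D)) + #(s.filter (f · ∈ D')) := by
  simp only [card_filter, ← sum_add_distrib]
  refine sum_congr rfl fun i _ => ?_
  by_cases hE : f i ∈ E <;> by_cases hD : f i ∈ D <;> by_cases hD' : f i ∈ D' <;> simp [*]

section Coverings

variable {ν : ℕ}

theorem siteA_injective : Function.Injective (siteA ν) := fun t t' h =>
  Fin.ext (by have := congrArg Fin.val h; simp only [siteA] at this; omega)

theorem siteB_injective : Function.Injective (siteB ν) := fun u u' h =>
  Fin.ext (by have := congrArg Fin.val h; simp only [siteB] at this; omega)

theorem siteA_ne_siteB (t u : Fin ν) : siteA ν t ≠ siteB ν u := fun h => by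
  have := congrArg Fin.val h; simp only [siteA, siteB] at this; omega

theorem siteA_val_mod_two (t : Fin ν) : (siteA ν t).val % 2 = 0 := by simp [siteA]

theorem siteB_val_mod_two (u : Fin ν) : (siteB ν u).val % 2 = 1 := by simp [siteB]

theorem site_cases (x : Fin (2 * ν)) : (∃ t, x = siteA ν t) ∨ ∃ u, x = siteB ν u := by
  rcases Nat.even_or_odd' x.val with ⟨k, hk | hk⟩
  · exact .inl ⟨⟨k, by omega⟩, Fin.ext hk⟩
  · exact .inr ⟨⟨k, by omega⟩, Fin.ext hk⟩

def siteSet (S U : Finset (Fin ν)) : Finset (Fin (2 * ν)) :=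
  S.image (siteA ν) ∪ U.image (siteB ν)

@[simp]
theorem siteA_mem_siteSet {S U : Finset (Fin ν)} {t : Fin ν} :
    siteA ν t ∈ siteSet S U ↔ t ∈ S := by
  simp [siteSet, siteA_injective.eq_iff, fun u => (siteA_ne_siteB t u).symm]

@[simp]
theorem siteB_mem_siteSet {S U : Finset (Fin ν)} {u : Fin ν} :
    siteB ν u ∈ siteSet S U ↔ u ∈ U := by
  simp [siteSet, siteB_injective.eq_iff, siteA_ne_siteB]

theorem prod_siteSet {M : Type*} [CommMonoid M] (f : Fin (2 * ν) → M) (S U : Finset (Fin ν)) :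
    ∏ x ∈ siteSet S U, f x = (∏ t ∈ S, f (siteA ν t)) * ∏ u ∈ U, f (siteB ν u) := by
  have hdisj : Disjoint (S.image (siteA ν)) (U.image (siteB ν)) := by
    simp only [Finset.disjoint_left, mem_image]
    rintro _ ⟨t, -, rfl⟩ ⟨u, -, h⟩
    exact siteA_ne_siteB t u h.symm
  rw [siteSet, prod_union hdisj, prod_image siteA_injective.injOn, prod_image siteB_injective.injOn]

theorem siteSet_eq_iff {S U : Finset (Fin ν)} {D : Finset (Fin (2 * ν))} :
    siteSet S U = D ↔ (∀ t, siteA ν t ∈ D ↔ t ∈ S) ∧ ∀ u, siteB ν u ∈ D ↔ u ∈ U := by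
  constructor
  · rintro rfl
    simp
  · rintro ⟨hA, hB⟩
    ext x
    rcases site_cases x with ⟨t, rfl⟩ | ⟨u, rfl⟩ <;> simp [hA, hB]

theorem mapsCut_iff {σ : Equiv.Perm (Fin ν)} {E : Finset (Fin (2 * ν))} :
    MapsCut ν σ E ↔ ∀ t, siteB ν (σ t) ∈ E ↔ siteA ν t ∈ E := by
  rw [MapsCut, Finset.ext_iff]
  constructor
  · intro h t
    simpa [siteB_injective.eq_iff, siteB_val_mod_two] using (h (siteB ν (σ t))).symm
  · intro h x
    rcases site_cases x with ⟨t, rfl⟩ | ⟨u, rfl⟩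
    · simp [siteA_val_mod_two, fun u => (siteA_ne_siteB t u).symm]
    · obtain ⟨t, rfl⟩ := σ.surjective u
      simp [siteB_injective.eq_iff, siteB_val_mod_two, h]

def IsTransversal (σ : Equiv.Perm (Fin ν)) (D : Finset (Fin (2 * ν))) : Prop :=
  ∀ t, siteB ν (σ t) ∈ D ↔ siteA ν t ∉ D

instance (σ : Equiv.Perm (Fin ν)) (D : Finset (Fin (2 * ν))) : Decidable (IsTransversal σ D) := by
  unfold IsTransversal
  infer_instance

def transversalCount (Ψ : Finset (Equiv.Perm (Fin ν))) (D : Finset (Fin (2 * ν))) : ℕ :=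
  #(Ψ.filter fun σ => IsTransversal σ D)

theorem siteSet_image_compl_eq_iff {σ : Equiv.Perm (Fin ν)} {T : Finset (Fin ν)}
    {D : Finset (Fin (2 * ν))} :
    siteSet T (Tᶜ.image σ) = D ↔ T = univ.filter (siteA ν · ∈ D) ∧ IsTransversal σ D := by
  rw [siteSet_eq_iff]
  simp only [IsTransversal, Finset.ext_iff, mem_filter, mem_univ, true_and, mem_image, mem_compl]
  constructor
  · rintro ⟨hA, hB⟩
    refine ⟨fun t => (hA t).symm, fun t => ?_⟩
    simp [hB, hA, σ.injective.eq_iff]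
  · rintro ⟨hA, hB⟩
    refine ⟨fun t => (hA t).symm, fun u => ?_⟩
    obtain ⟨t, rfl⟩ := σ.surjective u
    simp [hB, hA, σ.injective.eq_iff]

theorem isTransversal_siteSet_image_compl (σ : Equiv.Perm (Fin ν)) (T : Finset (Fin ν)) :
    IsTransversal σ (siteSet T (Tᶜ.image σ)) :=
  (siteSet_image_compl_eq_iff.mp rfl).2

theorem isTransversal_siteSet_compl_iff {σ : Equiv.Perm (Fin ν)} {S U : Finset (Fin ν)} :
    IsTransversal σ (siteSet S Uᶜ) ↔ S.image σ = U := by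
  simp only [IsTransversal, siteA_mem_siteSet, siteB_mem_siteSet, mem_compl, not_iff_not,
    Finset.ext_iff, mem_image]
  constructor
  · intro h u
    obtain ⟨t, rfl⟩ := σ.surjective u
    simp [σ.injective.eq_iff, h]
  · intro h t
    simp [← h, σ.injective.eq_iff]

theorem covPoly_eq_sum (σ : Equiv.Perm (Fin ν)) :
    covPoly ν σ
      = ∑ T ∈ univ.powerset, monomial (sqfreeExp (siteSet T (Tᶜ.image σ))) ((-1) ^ #T) := by
  rw [covPoly, Finset.prod_sub]
  refine Finset.sum_congr rfl fun T _ => ?_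
  rw [← mul_one ((-1 : ℂ) ^ #T), ← C_mul_monomial, ← prod_X_eq_monomial_sqfreeExp, prod_siteSet,
    prod_image σ.injective.injOn, compl_eq_univ_sdiff]
  simp only [map_pow, map_neg, map_one]
  ring

theorem coeff_covPoly (σ : Equiv.Perm (Fin ν)) (D : Finset (Fin (2 * ν))) :
    coeff (sqfreeExp D) (covPoly ν σ)
      = if IsTransversal σ D then (-1) ^ #(univ.filter (siteA ν · ∈ D)) else 0 := by
  simp only [covPoly_eq_sum, coeff_sum, coeff_monomial, sqfreeExp_injective.eq_iff,
    siteSet_image_compl_eq_iff, ite_and]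
  rw [Finset.sum_ite_eq']
  simp

theorem coeff_rvbPoly (Ψ : Finset (Equiv.Perm (Fin ν))) (D : Finset (Fin (2 * ν))) :
    coeff (sqfreeExp D) (rvbPoly ν Ψ)
      = (-1) ^ #(univ.filter (siteA ν · ∈ D)) * transversalCount Ψ D := by
  rw [rvbPoly, coeff_sum, Finset.sum_congr rfl fun σ _ => coeff_covPoly σ D, ← Finset.sum_filter,
    Finset.sum_const, nsmul_eq_mul, mul_comm, transversalCount]

variable {Ψ : Finset (Equiv.Perm (Fin ν))} {E : Finset (Fin (2 * ν))}

theorem SplitsAcross.transversalCount_mul (h : SplitsAcross (rvbPoly ν Ψ) E)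
    (D D' : Finset (Fin (2 * ν))) :
    transversalCount Ψ D * transversalCount Ψ D'
      = transversalCount Ψ (D ∩ E ∪ D' \ E) * transversalCount Ψ (D' ∩ E ∪ D \ E) := by
  obtain ⟨p, q, hF, hp, hq⟩ := h
  have hcoeff := coeff_mul_coeff_of_vars_subset hp hq (sqfreeExp D) (sqfreeExp D')
  rw [← sqfreeExp_inter_union_sdiff, ← sqfreeExp_inter_union_sdiff, ← hF] at hcoeff
  simp only [coeff_rvbPoly] at hcoeff
  have hsign : ((-1 : ℂ) ^ #(univ.filter (siteA ν · ∈ D ∩ E ∪ D' \ E)))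
        * (-1) ^ #(univ.filter (siteA ν · ∈ D' ∩ E ∪ D \ E))
      = (-1) ^ #(univ.filter (siteA ν · ∈ D)) * (-1) ^ #(univ.filter (siteA ν · ∈ D')) := by
    rw [← pow_add, ← pow_add, card_filter_mem_inter_union_sdiff_add]
  apply Nat.cast_injective (R := ℂ)
  have hne : ((-1 : ℂ) ^ #(univ.filter (siteA ν · ∈ D))) * (-1) ^ #(univ.filter (siteA ν · ∈ D'))
      ≠ 0 := by simp
  refine mul_left_cancel₀ hne ?_
  push_cast
  linear_combination hcoeff + (transversalCount Ψ (D ∩ E ∪ D' \ E)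
    * transversalCount Ψ (D' ∩ E ∪ D \ E) : ℂ) * hsign

theorem SplitsAcross.siteB_mem (h : SplitsAcross (rvbPoly ν Ψ) E) {σ : Equiv.Perm (Fin ν)}
    (hσ : σ ∈ Ψ) {t : Fin ν} (ht : siteA ν t ∈ E) : siteB ν (σ t) ∈ E := by
  set AE := univ.filter (siteA ν · ∈ E)
  set D₀ : Finset (Fin (2 * ν)) := siteSet univ ∅
  set D₁ := siteSet AEᶜ (AEᶜᶜ.image σ)
  -- `D₀ ∩ E ∪ D₁ \ E` contains every `A`-site, so a covering transversal to it avoids all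
  -- `B`-sites; but it contains `siteB (σ t)` unless that site lies in `E`.
  have hD₀ : ∀ τ : Equiv.Perm (Fin ν), IsTransversal τ D₀ := fun τ _ => by simp [D₀]
  have hpos : 0 < transversalCount Ψ (D₀ ∩ E ∪ D₁ \ E) := by
    have hcount := h.transversalCount_mul D₁ D₀
    have h₁ : 0 < transversalCount Ψ D₁ :=
      card_pos.mpr ⟨σ, mem_filter.mpr ⟨hσ, isTransversal_siteSet_image_compl σ AEᶜ⟩⟩
    have h₀ : 0 < transversalCount Ψ D₀ := card_pos.mpr ⟨σ, mem_filter.mpr ⟨hσ, hD₀ σ⟩⟩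
    exact Nat.pos_of_ne_zero (right_ne_zero_of_mul (hcount ▸ (Nat.mul_pos h₁ h₀).ne'))
  obtain ⟨τ, hτ⟩ := card_pos.mp hpos
  replace hτ := (mem_filter.mp hτ).2
  by_contra hb
  obtain ⟨t', ht'⟩ := τ.surjective (σ t)
  have hb_mem : siteB ν (τ t') ∈ D₀ ∩ E ∪ D₁ \ E := by simp [D₁, AE, ht', ht, hb]
  have ha_mem : siteA ν t' ∈ D₀ ∩ E ∪ D₁ \ E := by
    by_cases ht'E : siteA ν t' ∈ E <;> simp [D₀, D₁, AE, ht'E]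
  exact (hτ t').mp hb_mem ha_mem

theorem SplitsAcross.mapsCut (h : SplitsAcross (rvbPoly ν Ψ) E) {σ : Equiv.Perm (Fin ν)}
    (hσ : σ ∈ Ψ) : MapsCut ν σ E :=
  mapsCut_iff.mpr fun _ => ⟨fun hb => by_contra fun ha =>
    mem_compl.mp (h.compl.siteB_mem hσ (mem_compl.mpr ha)) hb, h.siteB_mem hσ⟩

theorem SplitsAcross.card_filter_mul (h : SplitsAcross (rvbPoly ν Ψ) E) {t₀ t u₀ u : Fin ν}
    (ht₀ : siteA ν t₀ ∈ E) (ht : siteA ν t ∉ E) (hu₀ : siteB ν u₀ ∈ E) (hu : siteB ν u ∉ E) :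
    #(Ψ.filter (· t₀ = u₀)) * #(Ψ.filter (· t = u))
      = #(Ψ.filter fun σ => σ t₀ = u₀ ∧ σ t = u) * #Ψ := by
  have hsingle : ∀ t' u', transversalCount Ψ (siteSet {t'} {u'}ᶜ) = #(Ψ.filter (· t' = u')) :=
    fun t' u' => congrArg card (filter_congr fun σ _ => by
      rw [isTransversal_siteSet_compl_iff, image_singleton, singleton_inj])
  have hmix₁ : siteSet {t₀} {u₀}ᶜ ∩ E ∪ siteSet {t} {u}ᶜ \ E = siteSet {t₀, t} {u₀, u}ᶜ := by
    rw [eq_comm, siteSet_eq_iff]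
    constructor
    · intro x
      by_cases hxE : siteA ν x ∈ E <;> simp [hxE] <;> rintro rfl <;> contradiction
    · intro x
      by_cases hxE : siteB ν x ∈ E <;> simp [hxE] <;> grind
  have hmix₂ : siteSet {t} {u}ᶜ ∩ E ∪ siteSet {t₀} {u₀}ᶜ \ E = siteSet ∅ univ := by
    rw [eq_comm, siteSet_eq_iff]
    constructor
    · intro x
      by_cases hxE : siteA ν x ∈ E <;> simp [hxE] <;> rintro rfl <;> contradiction
    · intro x
      by_cases hxE : siteB ν x ∈ E <;> simp [hxE] <;> rintro rfl <;> contradiction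
  have hpair : transversalCount Ψ (siteSet {t₀, t} {u₀, u}ᶜ)
      = #(Ψ.filter fun σ => σ t₀ = u₀ ∧ σ t = u) := by
    refine congrArg card (filter_congr fun σ hσ => ?_)
    have hσt₀ := h.siteB_mem hσ ht₀
    have hσt := mem_compl.mp (h.compl.siteB_mem hσ (mem_compl.mpr ht))
    rw [isTransversal_siteSet_compl_iff, image_insert, image_singleton]
    constructor
    · intro heq
      have h₀ : σ t₀ ∈ ({u₀, u} : Finset (Fin ν)) := heq ▸ mem_insert_self _ _
      have h₁ : σ t ∈ ({u₀, u} : Finset (Fin ν)) := heq ▸ mem_insert_of_mem (mem_singleton_self _)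
      rw [mem_insert, mem_singleton] at h₀ h₁
      exact ⟨h₀.resolve_right fun e => hu (e ▸ hσt₀), h₁.resolve_left fun e => hσt (e ▸ hu₀)⟩
    · rintro ⟨h₀, h₁⟩
      rw [h₀, h₁]
  have hall : transversalCount Ψ (siteSet ∅ univ) = #Ψ :=
    congrArg card (filter_true_of_mem fun σ _ t => by simp)
  rw [← hsingle, ← hsingle, h.transversalCount_mul, hmix₁, hmix₂, hpair, hall]

theorem SplitsAcross.apply_eq_of_apply_ne (h : SplitsAcross (rvbPoly ν Ψ) E)
    (hprime : (#Ψ).Prime) {t₀ t : Fin ν} (ht₀ : siteA ν t₀ ∈ E) (ht : siteA ν t ∉ E)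
    {σ₁ σ₂ : Equiv.Perm (Fin ν)} (h₁ : σ₁ ∈ Ψ) (h₂ : σ₂ ∈ Ψ) (hne : σ₁ t₀ ≠ σ₂ t₀)
    {τ τ' : Equiv.Perm (Fin ν)} (hτ : τ ∈ Ψ) (hτ' : τ' ∈ Ψ) : τ' t = τ t := by
  have hkey := h.card_filter_mul ht₀ ht (h.siteB_mem h₁ ht₀)
    (mem_compl.mp (h.compl.siteB_mem hτ (mem_compl.mpr ht)))
  have hpos₀ : 0 < #(Ψ.filter (· t₀ = σ₁ t₀)) := card_pos.mpr ⟨σ₁, mem_filter.mpr ⟨h₁, rfl⟩⟩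
  have hlt₀ : #(Ψ.filter (· t₀ = σ₁ t₀)) < #Ψ :=
    card_lt_card (filter_ssubset.mpr ⟨σ₂, h₂, hne.symm⟩)
  have hpos : 0 < #(Ψ.filter (· t = τ t)) := card_pos.mpr ⟨τ, mem_filter.mpr ⟨hτ, rfl⟩⟩
  have hdvd : #Ψ ∣ #(Ψ.filter (· t = τ t)) :=
    (hprime.dvd_mul.mp ⟨_, hkey.trans (mul_comm _ _)⟩).resolve_left
      (Nat.not_dvd_of_pos_of_lt hpos₀ hlt₀)
  have hall : #(Ψ.filter (· t = τ t)) = #Ψ :=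
    le_antisymm (card_filter_le _ _) (Nat.le_of_dvd hpos hdvd)
  exact card_filter_eq_iff.mp hall τ' hτ'

theorem SplitsAcross.flatVia_or_poleVia (h : SplitsAcross (rvbPoly ν Ψ) E)
    (hprime : (#Ψ).Prime) : FlatVia ν Ψ E ∨ PoleVia ν Ψ E := by
  have hcut : ∀ σ ∈ Ψ, MapsCut ν σ E := fun σ hσ => h.mapsCut hσ
  by_cases hpole : ∀ t, siteA ν t ∈ E → ∀ σ₁ ∈ Ψ, ∀ σ₂ ∈ Ψ, σ₁ t = σ₂ t
  · exact .inr ⟨hcut, fun σ₁ h₁ σ₂ h₂ t ht => hpole t ht σ₁ h₁ σ₂ h₂⟩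
  · push Not at hpole
    obtain ⟨t₀, ht₀, σ₁, h₁, σ₂, h₂, hne⟩ := hpole
    exact .inl ⟨hcut, fun τ' hτ' τ hτ t ht =>
      h.apply_eq_of_apply_ne hprime ht₀ ht h₁ h₂ hne hτ hτ'⟩

theorem prod_dimers_mem_supported (σ : Equiv.Perm (Fin ν)) {T : Finset (Fin ν)}
    {E' : Finset (Fin (2 * ν))} (hA : ∀ t ∈ T, siteA ν t ∈ E') (hB : ∀ t ∈ T, siteB ν (σ t) ∈ E') :
    ∏ t ∈ T, (X (siteB ν (σ t)) - X (siteA ν t) : MvPolynomial (Fin (2 * ν)) ℂ)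
      ∈ supported ℂ (E' : Set (Fin (2 * ν))) :=
  prod_mem fun t ht => sub_mem (X_mem_supported.mpr (hB t ht)) (X_mem_supported.mpr (hA t ht))

theorem FlatVia.splitsAcross (hΨ : Ψ.Nonempty) (h : FlatVia ν Ψ E) :
    SplitsAcross (rvbPoly ν Ψ) E := by
  obtain ⟨σ₀, hσ₀⟩ := hΨ
  set AE := univ.filter (siteA ν · ∈ E)
  have hAE : ∀ {t}, t ∈ AE ↔ siteA ν t ∈ E := by simp [AE]
  refine ⟨∑ σ ∈ Ψ, ∏ t ∈ AE, (X (siteB ν (σ t)) - X (siteA ν t)),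
    ∏ t ∈ AEᶜ, (X (siteB ν (σ₀ t)) - X (siteA ν t)), ?_, ?_, ?_⟩
  · rw [rvbPoly, sum_mul]
    refine sum_congr rfl fun σ hσ => ?_
    rw [covPoly, ← prod_mul_prod_compl AE]
    congr 1
    exact prod_congr rfl fun t ht => by
      rw [h.2 σ hσ σ₀ hσ₀ t (hAE.not.mp (mem_compl.mp ht))]
  · refine coe_subset.mp (mem_supported.mp (sum_mem fun σ hσ => ?_))
    exact prod_dimers_mem_supported σ (fun t => hAE.mp)
      (fun t ht => (mapsCut_iff.mp (h.1 σ hσ) t).mpr (hAE.mp ht))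
  · refine coe_subset.mp (mem_supported.mp ?_)
    exact prod_dimers_mem_supported σ₀ (fun t ht => mem_compl.mpr (hAE.not.mp (mem_compl.mp ht)))
      (fun t ht => mem_compl.mpr fun hb =>
        hAE.not.mp (mem_compl.mp ht) ((mapsCut_iff.mp (h.1 σ₀ hσ₀) t).mp hb))

theorem PoleVia.flatVia_compl (h : PoleVia ν Ψ E) : FlatVia ν Ψ Eᶜ :=
  ⟨fun σ hσ => mapsCut_iff.mpr fun t => by simp only [mem_compl, mapsCut_iff.mp (h.1 σ hσ) t],
    fun σ₁ h₁ σ₂ h₂ t ht => h.2 σ₁ h₁ σ₂ h₂ t (not_not.mp (mt mem_compl.mpr ht))⟩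

theorem PoleVia.splitsAcross (hΨ : Ψ.Nonempty) (h : PoleVia ν Ψ E) :
    SplitsAcross (rvbPoly ν Ψ) E := by
  simpa using (h.flatVia_compl.splitsAcross hΨ).compl

end Coverings

theorem stmt_13_general (ν : ℕ) (Ψ : Finset (Equiv.Perm (Fin ν)))
    (hprime : Nat.Prime Ψ.card) :
    (∃ E : Finset (Fin (2 * ν)), E.Nonempty ∧ E ≠ Finset.univ ∧
        (FlatVia ν Ψ E ∨ PoleVia ν Ψ E))
      ↔ ∃ E : Finset (Fin (2 * ν)), E.Nonempty ∧ E ≠ Finset.univ ∧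
          SplitsAcross (rvbPoly ν Ψ) E := by
  have hΨ : Ψ.Nonempty := card_pos.mp hprime.pos
  constructor
  · rintro ⟨E, hne, hE, hflat | hpole⟩
    · exact ⟨E, hne, hE, hflat.splitsAcross hΨ⟩
    · exact ⟨E, hne, hE, hpole.splitsAcross hΨ⟩
  · rintro ⟨E, hne, hE, hsplit⟩
    exact ⟨E, hne, hE, hsplit.flatVia_or_poleVia hprime⟩

/-- Theorem 3.4, Dichotomy: if `s = #Ψ` is prime, then exactly
one of the following holds: (a) `Ψ` is flat or a pole; (b) `F_Ψ` splits across no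
nontrivial bipartition.  Equivalently, `F_Ψ` splits across some nontrivial
bipartition iff `Ψ` is flat or a pole. -/
theorem stmt_13 (ν : ℕ) (hν : 2 ≤ ν) (Ψ : Finset (Equiv.Perm (Fin ν)))
    (hΨ : 2 ≤ Ψ.card) (hprime : Nat.Prime Ψ.card) :
    (∃ E : Finset (Fin (2 * ν)), E.Nonempty ∧ E ≠ Finset.univ ∧
        (FlatVia ν Ψ E ∨ PoleVia ν Ψ E))
      ↔ ∃ E : Finset (Fin (2 * ν)), E.Nonempty ∧ E ≠ Finset.univ ∧
          SplitsAcross (rvbPoly ν Ψ) E :=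
  stmt_13_general ν Ψ hprime
end
end
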